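/- arXiv:2512.23845 — 2 statements merged into one kernel-verified Lean document; each statement's English description precedes it below -/
import Mathlib

section
/- Let $n, l \in \mathbb{N}$, let $M \in \mathbb{N}_0^{n \times n}$ and $A \in \mathbb{N}_0^{n \times l}$. Then the rational number $C(M,A) := \frac{P(A!)}{2^{\mathrm{tr}(M)}} \sum \prod_{i=1}^l \frac{1}{P(M_i!)}$ is an integer, where the sum ranges over all tuples $(M_1,\dots,M_l)$ of matrices in $\mathbb{N}_0^{n \times n}$ satisfying $M_1 + \cdots + M_l = M$ and $SC(M_k,j) + SR(M_k,j) = A_{j,k}$ for all $j \in [n]$ and $k \in [l]$. -/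
/-!
Read `T` as a multigraph with `T a b` edges `a → b`, so that `∑ a, T a j + ∑ b, T j b` is the
degree of `j`, loops counted twice. At each vertex `2 ^ T j j * (T j j)! = (2 * T j j)‼` divides
`(2 * T j j)!` and `∏ b ≠ j, (T j b)!` divides `(∑ b ≠ j, T j b)!`, hence
`2 ^ tr T * ∏ a b, (T a b)!` divides `∏ j, (deg j)!`. For an admissible tuple `(T₁, …, T_l)`,
`∏ j k, (A j k)! = ∏ k j, (deg_{T_k} j)!` and `tr M = ∑ k, tr T_k`, so its summand in `C(M, A)`
is a product of such integer quotients.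
-/

open Finset Nat

theorem Nat.doubleFactorial_dvd_factorial : ∀ n : ℕ, n‼ ∣ n !
  | 0 => dvd_rfl
  | n + 1 => by rw [factorial_eq_mul_doubleFactorial]; exact dvd_mul_right _ _

theorem Nat.two_pow_mul_factorial_dvd_factorial_two_mul (m : ℕ) : 2 ^ m * m ! ∣ (2 * m)! := by
  rw [← doubleFactorial_two_mul]
  exact doubleFactorial_dvd_factorial _

theorem Finset.two_pow_mul_prod_factorial_dvd_factorial_add_sum {ι : Type*} [DecidableEq ι]
    {s : Finset ι} {j : ι} (hj : j ∈ s) (f : ι → ℕ) :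
    2 ^ f j * ∏ b ∈ s, (f b)! ∣ (f j + ∑ b ∈ s, f b)! := by
  rw [← mul_prod_erase s _ hj, ← add_sum_erase s _ hj, ← mul_assoc, ← add_assoc, ← two_mul]
  exact (mul_dvd_mul (two_pow_mul_factorial_dvd_factorial_two_mul _)
    (prod_factorial_dvd_factorial_sum _ _)).trans (factorial_mul_factorial_dvd_factorial_add _ _)

namespace Matrix

variable {ι : Type*} [Fintype ι]

def degree (T : Matrix ι ι ℕ) (j : ι) : ℕ := ∑ a, T a j + ∑ b, T j b

theorem two_pow_trace_mul_prod_factorial_dvd_prod_factorial_degree (T : Matrix ι ι ℕ) :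
    2 ^ T.trace * ∏ a, ∏ b, (T a b)! ∣ ∏ j, (T.degree j)! := by
  classical
  rw [trace, ← prod_pow_eq_pow_sum, ← prod_mul_distrib]
  refine prod_dvd_prod_of_dvd _ _ fun j _ => ?_
  have hdiag : T j j ≤ ∑ a, T a j :=
    single_le_sum (f := fun a => T a j) (fun _ _ => Nat.zero_le _) (mem_univ j)
  exact (two_pow_mul_prod_factorial_dvd_factorial_add_sum (mem_univ j) (T j)).trans
    (factorial_dvd_factorial (Nat.add_le_add_right hdiag _))

end Matrix

theorem exists_int_eq_prod_factorial_div_of_degree_eq {ι κ : Type*} [Fintype ι] [Fintype κ]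
    {M : Matrix ι ι ℕ} {A : Matrix ι κ ℕ} {T : κ → Matrix ι ι ℕ} (hM : ∑ k, T k = M)
    (hA : ∀ j k, (T k).degree j = A j k) :
    ∃ z : ℤ, (∏ j, ∏ k, ((A j k)! : ℚ)) / 2 ^ (∑ j, M j j) *
      ∏ k, 1 / ∏ a, ∏ b, ((T k a b)! : ℚ) = z := by
  have htrace : ∑ j, M j j = ∑ k, (T k).trace := by rw [← Matrix.trace_sum, hM]; rfl
  have hfactorial : ∏ j, ∏ k, ((A j k)! : ℚ) = ∏ k, ∏ j, (((T k).degree j)! : ℚ) := by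
    rw [prod_comm]; simp only [hA]
  choose w hw using fun k => (T k).two_pow_trace_mul_prod_factorial_dvd_prod_factorial_degree
  refine ⟨∏ k, w k, ?_⟩
  rw [htrace, hfactorial, ← prod_pow_eq_pow_sum, ← prod_div_distrib, ← prod_mul_distrib]
  push_cast
  refine prod_congr rfl fun k _ => ?_
  rw [← Nat.cast_prod, hw k]
  push_cast
  field_simp

open Classical in
/-- **Integrality of the combinatorial factor `C(M, A)`.**
For `M ∈ ℕ₀^{n×n}` and `A ∈ ℕ₀^{n×l}`, the rational number
`C(M,A) = P(A!) / 2^{tr M} · ∑ ∏ᵢ 1 / P(Mᵢ!)`,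
where the sum ranges over all tuples `(M₁, …, M_l)` of matrices in `ℕ₀^{n×n}` with
`M₁ + ⋯ + M_l = M` and `SC(Mₖ, j) + SR(Mₖ, j) = A j k` for all `j, k`, is an integer. -/
theorem C_of_M_A_isInt (n l : ℕ) (M : Matrix (Fin n) (Fin n) ℕ) (A : Matrix (Fin n) (Fin l) ℕ) :
    ∃ z : ℤ,
      ((∏ j, ∏ k, (Nat.factorial (A j k) : ℚ)) / 2 ^ (∑ j, M j j)) *
        (∑ᶠ T : Fin l → Matrix (Fin n) (Fin n) ℕ,
          if (∑ k, T k) = M ∧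
              (∀ (j : Fin n) (k : Fin l), (∑ a, T k a j) + (∑ b, T k j b) = A j k) then
            ∏ i, (1 : ℚ) / ∏ a, ∏ b, (Nat.factorial (T i a b) : ℚ)
          else 0) = (z : ℚ) := by
  rw [mul_finsum]
  refine finsum_induction (fun x : ℚ => ∃ z : ℤ, x = z) ⟨0, Int.cast_zero.symm⟩ ?_ fun T => ?_
  · rintro _ _ ⟨a, rfl⟩ ⟨b, rfl⟩
    exact ⟨a + b, (Int.cast_add a b).symm⟩
  · split_ifs with hT
    · exact exists_int_eq_prod_factorial_div_of_degree_eq hT.1 hT.2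
    · exact ⟨0, by simp⟩
end

section
/- Let $n \in \mathbb{N}$, let $\alpha = (\alpha_1,\dots,\alpha_n) \in \mathbb{N}_0^n$, and let $M \in \mathbb{N}_0^{n \times n}$ be upper triangular (i.e. $M_{k,l} = 0$ for $k > l$) with $SC(M,j) + SR(M,j) = \alpha_j$ for all $j \in [n]$. Let $O = \{(k,r) : k \in [n], 1 \le r \le \alpha_k\}$. Then the number of pairings $\mathcal{P}$ of $O$ such that for all $k \le l$ in $[n]$ the number of pairs in $\mathcal{P}$ of the form $\{(k,r),(l,s)\}$ (with first coordinates $k$ and $l$) equals $M_{k,l}$ is exactly $\frac{\alpha_1! \cdots \alpha_n!}{2^{\mathrm{tr}(M)} \prod_{a,b=1}^n M_{a,b}!}$. -/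
noncomputable section

/-- `P` is a pairing of the finite set `O`: a collection of pairwise disjoint
two-element subsets of `O` whose union is `O`. -/
def IsPairing {ι : Type*} [DecidableEq ι] (O : Finset ι) (P : Finset (Finset ι)) : Prop :=
  (∀ p ∈ P, p.card = 2) ∧ (∀ p ∈ P, ∀ p' ∈ P, p ≠ p' → Disjoint p p') ∧ P.biUnion id = O

open Classical in
/-- The (finite) collection of all pairings of a finite set `O`. -/
def pairings {ι : Type*} [DecidableEq ι] (O : Finset ι) : Finset (Finset (Finset ι)) :=
  O.powerset.powerset.filter fun P => IsPairing O P

/-- The occurrence set `O = {(k, r) : k ∈ [n], r < α_k}`. -/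
def occSet {n : ℕ} (α : Fin n → ℕ) : Finset (Fin n × ℕ) :=
  Finset.univ.biUnion fun k => (Finset.range (α k)).image fun r => (k, r)

/-!
Double counting. For a colour type `{k, l}` with `k ≤ l` and `M k l > 0`, count the pairs `(P, p)`
with `P` a pairing realising `M` and `p ∈ P` a pair of colour type `{k, l}`. Each `P` contains
`M k l` such pairs; conversely, removing `p` is a bijection from the pairings containing `p` onto
the pairings of `O \ p` realising `M - E_{kl}`, and there are `α_k α_l` (resp. `α_k choose 2`)
candidates `p`. Induction on the number of edges then gives
`#pairings · 2^{tr M} ∏ M_{ab}! = ∏ α_j!`, the factor `2` of a loop matching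
`2 (α choose 2) = α (α - 1)`. Colours are an arbitrary `c : ι → κ`; the theorem is the case
`c = Prod.fst` on `occSet α`.
-/

open Finset
open scoped Nat

namespace IsPairing

variable {ι : Type*} [DecidableEq ι] {O : Finset ι} {P Q : Finset (Finset ι)} {p : Finset ι}

theorem subset_of_mem (h : IsPairing O P) (hp : p ∈ P) : p ⊆ O := by
  rw [← h.2.2]
  exact subset_biUnion_of_mem id hp

theorem erase (h : IsPairing O P) (hp : p ∈ P) : IsPairing (O \ p) (P.erase p) := by
  refine ⟨fun q hq => h.1 q (mem_of_mem_erase hq),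
    fun q hq q' hq' => h.2.1 q (mem_of_mem_erase hq) q' (mem_of_mem_erase hq'), ?_⟩
  ext z
  simp only [mem_biUnion, mem_erase, mem_sdiff, id]
  constructor
  · rintro ⟨q, ⟨hqp, hq⟩, hzq⟩
    exact ⟨h.subset_of_mem hq hzq, disjoint_left.mp (h.2.1 q hq p hp hqp) hzq⟩
  · rintro ⟨hzO, hzp⟩
    obtain ⟨q, hq, hzq⟩ := mem_biUnion.mp (h.2.2 ▸ hzO)
    exact ⟨q, ⟨fun hqp => hzp (hqp ▸ hzq), hq⟩, hzq⟩

theorem notMem_of_sdiff (h : IsPairing (O \ p) Q) (hp : p.Nonempty) : p ∉ Q := fun hpQ => by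
  obtain ⟨z, hz⟩ := hp
  exact (mem_sdiff.mp (h.subset_of_mem hpQ hz)).2 hz

theorem insert (h : IsPairing (O \ p) Q) (hpO : p ⊆ O) (hp : #p = 2) :
    IsPairing O (insert p Q) := by
  have hdisj : ∀ q ∈ Q, Disjoint p q := fun q hq =>
    disjoint_right.mpr fun _ hz => (mem_sdiff.mp (h.subset_of_mem hq hz)).2
  refine ⟨?_, ?_, ?_⟩
  · simpa [hp] using h.1
  · simp only [mem_insert]
    rintro q (rfl | hq) q' (rfl | hq') hne
    exacts [absurd rfl hne, hdisj q' hq', (hdisj q hq).symm, h.2.1 q hq q' hq' hne]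
  · rw [biUnion_insert, h.2.2, id, union_sdiff_of_subset hpO]

end IsPairing

section Pairings

variable {ι : Type*} [DecidableEq ι]

theorem mem_pairings {O : Finset ι} {P : Finset (Finset ι)} : P ∈ pairings O ↔ IsPairing O P := by
  classical
  simp only [pairings, mem_filter, mem_powerset, and_iff_right_iff_imp]
  exact fun h p hp => mem_powerset.mpr (h.subset_of_mem hp)

theorem pairings_empty : pairings (∅ : Finset ι) = {∅} := by
  ext P
  rw [mem_pairings, mem_singleton]
  refine ⟨fun h => eq_empty_of_forall_notMem fun p hp => ?_, fun h => by simp [h, IsPairing]⟩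
  have := card_le_card (h.subset_of_mem hp)
  rw [h.1 p hp] at this
  simp at this

end Pairings

section PairTypes

variable {ι κ : Type*} [DecidableEq ι] [DecidableEq κ] (c : ι → κ) (O : Finset ι)

def pairsOfType (k l : κ) : Finset (Finset ι) :=
  (O.powersetCard 2).filter fun p => p.image c = {k, l}

variable {c O}

theorem pair_eq_pair_iff {α : Type*} [DecidableEq α] {a b a' b' : α} :
    ({a, b} : Finset α) = {a', b'} ↔ a = a' ∧ b = b' ∨ a = b' ∧ b = a' := by
  rw [← coe_inj, coe_pair, coe_pair, Set.pair_eq_pair_iff]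

theorem mem_pairsOfType {k l : κ} {p : Finset ι} :
    p ∈ pairsOfType c O k l ↔ ∃ x ∈ O, ∃ y ∈ O, x ≠ y ∧ c x = k ∧ c y = l ∧ p = {x, y} := by
  simp only [pairsOfType, mem_filter, mem_powersetCard]
  constructor
  · rintro ⟨⟨hpO, hp⟩, hpc⟩
    obtain ⟨x, y, hxy, rfl⟩ := card_eq_two.mp hp
    have hx := hpO (mem_insert_self x {y})
    have hy := hpO (mem_insert_of_mem (mem_singleton_self y))
    rw [image_insert, image_singleton, pair_eq_pair_iff] at hpc
    rcases hpc with ⟨hxk, hyl⟩ | ⟨hxl, hyk⟩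
    · exact ⟨x, hx, y, hy, hxy, hxk, hyl, rfl⟩
    · exact ⟨y, hy, x, hx, hxy.symm, hyk, hxl, pair_comm x y⟩
  · rintro ⟨x, hx, y, hy, hxy, rfl, rfl, rfl⟩
    exact ⟨⟨insert_subset hx (singleton_subset_iff.mpr hy), card_pair hxy⟩,
      by rw [image_insert, image_singleton]⟩

theorem pairsOfType_self (k : κ) :
    pairsOfType c O k k = (O.filter (c · = k)).powersetCard 2 := by
  ext p
  simp only [mem_pairsOfType, mem_powersetCard, card_eq_two, subset_iff, mem_filter]
  constructor
  · rintro ⟨x, hx, y, hy, hxy, hxk, hyk, rfl⟩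
    refine ⟨?_, x, y, hxy, rfl⟩
    simp only [mem_insert, mem_singleton]
    rintro z (rfl | rfl) <;> simp_all
  · rintro ⟨hp, x, y, hxy, rfl⟩
    obtain ⟨hx, hxk⟩ := hp (mem_insert_self x {y})
    obtain ⟨hy, hyk⟩ := hp (mem_insert_of_mem (mem_singleton_self y))
    exact ⟨x, hx, y, hy, hxy, hxk, hyk, rfl⟩

theorem card_pairsOfType_self (k : κ) :
    #(pairsOfType c O k k) = (#(O.filter (c · = k))).choose 2 := by
  rw [pairsOfType_self, card_powersetCard]

theorem pairsOfType_of_ne {k l : κ} (hkl : k ≠ l) :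
    pairsOfType c O k l =
      ((O.filter (c · = k)) ×ˢ (O.filter (c · = l))).image fun xy => {xy.1, xy.2} := by
  ext p
  simp only [mem_pairsOfType, mem_image, mem_product, mem_filter, Prod.exists]
  constructor
  · rintro ⟨x, hx, y, hy, -, hxk, hyl, rfl⟩
    exact ⟨x, y, ⟨⟨hx, hxk⟩, hy, hyl⟩, rfl⟩
  · rintro ⟨x, y, ⟨⟨hx, rfl⟩, hy, rfl⟩, rfl⟩
    exact ⟨x, hx, y, hy, fun hxy => hkl (congrArg c hxy), rfl, rfl, rfl⟩

theorem card_pairsOfType_of_ne {k l : κ} (hkl : k ≠ l) :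
    #(pairsOfType c O k l) = #(O.filter (c · = k)) * #(O.filter (c · = l)) := by
  rw [pairsOfType_of_ne hkl, card_image_of_injOn, card_product]
  rintro ⟨x, y⟩ hxy ⟨x', y'⟩ hxy' h
  simp only [coe_product, coe_filter, Set.mem_prod, Set.mem_ofPred_eq] at hxy hxy'
  rcases pair_eq_pair_iff.mp h with ⟨rfl, rfl⟩ | ⟨rfl, rfl⟩
  · rfl
  · exact absurd (hxy.1.2.symm.trans hxy'.2.2) hkl

theorem card_filter_sdiff_add_single {O p : Finset ι} {k l : κ} (hp : p ∈ pairsOfType c O k l)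
    (j : κ) :
    #((O \ p).filter (c · = j)) + (Pi.single k 1 : κ → ℕ) j + (Pi.single l 1 : κ → ℕ) j =
      #(O.filter (c · = j)) := by
  obtain ⟨x, hx, y, hy, hxy, rfl, rfl, rfl⟩ := mem_pairsOfType.mp hp
  simp only [card_filter]
  rw [← sum_sdiff (insert_subset hx (singleton_subset_iff.mpr hy)), sum_pair hxy, add_assoc]
  simp only [Pi.single_apply, eq_comm]

end PairTypes

section Realizations

variable {ι κ : Type*} [DecidableEq ι] [LinearOrder κ] (c : ι → κ) (M : Matrix κ κ ℕ)

def HasPairTypeCounts (P : Finset (Finset ι)) : Prop :=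
  ∀ k l, k ≤ l → #(P.filter fun p => p.image c = {k, l}) = M k l

open Classical in
def realizations (O : Finset ι) : Finset (Finset (Finset ι)) :=
  (pairings O).filter (HasPairTypeCounts c M)

variable {c M} {O : Finset ι} {k l : κ}

theorem pair_eq_pair_iff_of_le {a b a' b' : κ} (hab : a ≤ b) (hab' : a' ≤ b') :
    ({a, b} : Finset κ) = {a', b'} ↔ a = a' ∧ b = b' := by
  rw [pair_eq_pair_iff]
  constructor
  · rintro (h | ⟨rfl, rfl⟩)
    exacts [h, ⟨le_antisymm hab hab', le_antisymm hab' hab⟩]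
  · exact Or.inl

theorem card_filter_insert_of_image_eq {p : Finset ι} {Q : Finset (Finset ι)} (hpQ : p ∉ Q)
    (hp : p.image c = {k, l}) (hkl : k ≤ l) {k' l' : κ} (hkl' : k' ≤ l') :
    #((insert p Q).filter fun q => q.image c = {k', l'}) =
      #(Q.filter fun q => q.image c = {k', l'}) + Matrix.single k l 1 k' l' := by
  rw [filter_insert, hp]
  by_cases h : k = k' ∧ l = l'
  · obtain ⟨rfl, rfl⟩ := h
    rw [if_pos rfl, card_insert_of_notMem fun h => hpQ (mem_filter.mp h).1,
      Matrix.single_apply_same]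
  · rw [if_neg ((pair_eq_pair_iff_of_le hkl hkl').not.mpr h),
      Matrix.single_apply_of_ne _ _ _ _ _ h, add_zero]

theorem hasPairTypeCounts_insert_iff {p : Finset ι} {Q : Finset (Finset ι)} (hpQ : p ∉ Q)
    (hp : p.image c = {k, l}) (hkl : k ≤ l) :
    HasPairTypeCounts c (M + Matrix.single k l 1) (insert p Q) ↔ HasPairTypeCounts c M Q := by
  refine forall₂_congr fun k' l' => forall_congr' fun hkl' => ?_
  rw [card_filter_insert_of_image_eq hpQ hp hkl hkl', Matrix.add_apply, Nat.add_right_cancel_iff]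

theorem card_filter_mem_realizations_add_single {p : Finset ι} (hkl : k ≤ l)
    (hp : p ∈ pairsOfType c O k l) :
    #((realizations c (M + Matrix.single k l 1) O).filter (p ∈ ·)) =
      #(realizations c M (O \ p)) := by
  simp only [pairsOfType, mem_filter, mem_powersetCard] at hp
  obtain ⟨⟨hpO, hp2⟩, hpc⟩ := hp
  have hpne : p.Nonempty := card_pos.mp (by omega)
  symm
  refine card_nbij' (insert p) (·.erase p) ?_ ?_ ?_ ?_
  · intro Q hQ
    simp only [realizations, coe_filter, Set.mem_ofPred_eq, mem_filter, mem_pairings] at hQ ⊢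
    have hpQ := hQ.1.notMem_of_sdiff hpne
    exact ⟨⟨hQ.1.insert hpO hp2, (hasPairTypeCounts_insert_iff hpQ hpc hkl).mpr hQ.2⟩,
      mem_insert_self p Q⟩
  · intro P hP
    simp only [realizations, coe_filter, Set.mem_ofPred_eq, mem_filter, mem_pairings] at hP ⊢
    obtain ⟨⟨hPO, hPM⟩, hpP⟩ := hP
    rw [← insert_erase hpP, hasPairTypeCounts_insert_iff (notMem_erase p P) hpc hkl] at hPM
    exact ⟨hPO.erase hpP, hPM⟩
  · intro Q hQ
    simp only [realizations, coe_filter, Set.mem_ofPred_eq, mem_pairings] at hQ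
    exact erase_insert (hQ.1.notMem_of_sdiff hpne)
  · intro P hP
    exact insert_erase (mem_filter.mp hP).2

theorem card_realizations_mul_eq_sum (hkl : k ≤ l) :
    #(realizations c M O) * M k l =
      ∑ p ∈ pairsOfType c O k l, #((realizations c M O).filter (p ∈ ·)) := by
  classical
  have hcount : ∀ P ∈ realizations c M O, #((pairsOfType c O k l).filter (· ∈ P)) = M k l := by
    intro P hP
    obtain ⟨hPO, hPM⟩ := mem_filter.mp hP
    rw [← hPM k l hkl]
    congr 1
    ext p
    simp only [pairsOfType, mem_filter, mem_powersetCard]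
    refine ⟨fun h => ⟨h.2, h.1.2⟩, fun h => ⟨⟨⟨?_, ?_⟩, h.2⟩, h.1⟩⟩
    exacts [(mem_pairings.mp hPO).subset_of_mem h.1, (mem_pairings.mp hPO).1 p h.1]
  rw [← sum_const_nat hcount]
  exact sum_card_bipartiteAbove_eq_sum_card_bipartiteBelow (fun P p => p ∈ P)

end Realizations

theorem prod_factorial_add_single {α : Type*} [Fintype α] [DecidableEq α] (f : α → ℕ) (i : α) :
    ∏ x, (f x + (Pi.single i 1 : α → ℕ) x)! = (f i + 1) * ∏ x, (f x)! := by
  rw [← mul_prod_erase univ _ (mem_univ i), ← mul_prod_erase univ (fun x => (f x)!) (mem_univ i),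
    Pi.single_eq_same, Nat.factorial_succ, mul_assoc]
  congr 2
  exact prod_congr rfl fun x hx => by rw [Pi.single_eq_of_ne (ne_of_mem_erase hx), add_zero]

section MatrixFactors

variable {κ : Type*} [Fintype κ] [DecidableEq κ]

def vertexDegree (M : Matrix κ κ ℕ) (j : κ) : ℕ := ∑ a, M a j + ∑ b, M j b

def symmetryFactor (M : Matrix κ κ ℕ) : ℕ := 2 ^ M.trace * ∏ a, ∏ b, (M a b)!

variable (M : Matrix κ κ ℕ) (k l : κ)

theorem vertexDegree_add_single (j : κ) :
    vertexDegree (M + Matrix.single k l 1) j =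
      vertexDegree M j + (Pi.single k 1 : κ → ℕ) j + (Pi.single l 1 : κ → ℕ) j := by
  have hcol : ∑ a, Matrix.single k l (1 : ℕ) a j = (Pi.single l 1 : κ → ℕ) j := by
    by_cases h : j = l
    · subst h; simp [Matrix.single_apply]
    · simp [h, Ne.symm h]
  have hrow : ∑ b, Matrix.single k l (1 : ℕ) j b = (Pi.single k 1 : κ → ℕ) j := by
    by_cases h : j = k
    · subst h; simp [Matrix.single_apply]
    · simp [h, Ne.symm h]
  simp only [vertexDegree, Matrix.add_apply, sum_add_distrib, hcol, hrow]
  ring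

theorem prod_factorial_add_single_entry :
    ∏ a, ∏ b, ((M + Matrix.single k l 1 : Matrix κ κ ℕ) a b)! =
      (M k l + 1) * ∏ a, ∏ b, (M a b)! := by
  simp only [← Fintype.prod_prod_type']
  rw [← prod_factorial_add_single (fun x : κ × κ => M x.1 x.2) (k, l)]
  refine prod_congr rfl fun x _ => ?_
  simp [Matrix.single_apply, Pi.single_apply, Prod.ext_iff, eq_comm]

theorem symmetryFactor_add_single :
    symmetryFactor (M + Matrix.single k l 1) =
      (if k = l then 2 else 1) * (M k l + 1) * symmetryFactor M := by
  rw [symmetryFactor, symmetryFactor, prod_factorial_add_single_entry, Matrix.trace_add]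
  split_ifs with h
  · subst h; rw [Matrix.trace_single_eq_same, pow_succ]; ring
  · rw [Matrix.trace_single_eq_of_ne k l 1 h]; ring

end MatrixFactors

section Counting

variable {ι κ : Type*} [DecidableEq ι] [Fintype κ] [LinearOrder κ] {c : ι → κ}

theorem card_realizations_add_single_mul {M : Matrix κ κ ℕ} {O : Finset ι} {k l : κ}
    (hkl : k ≤ l)
    (hM : ∀ O' : Finset ι, (∀ j, vertexDegree M j = #(O'.filter (c · = j))) →
      #(realizations c M O') * symmetryFactor M = ∏ j, (vertexDegree M j)!)
    (hO : ∀ j, vertexDegree (M + Matrix.single k l 1) j = #(O.filter (c · = j))) :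
    #(realizations c (M + Matrix.single k l 1) O) * symmetryFactor (M + Matrix.single k l 1) =
      ∏ j, (vertexDegree (M + Matrix.single k l 1) j)! := by
  have key : #(realizations c (M + Matrix.single k l 1) O) * (M k l + 1) * symmetryFactor M =
      #(pairsOfType c O k l) * ∏ j, (vertexDegree M j)! := by
    have hsum := card_realizations_mul_eq_sum (c := c) (M := M + Matrix.single k l 1) (O := O) hkl
    rw [Matrix.add_apply, Matrix.single_apply_same] at hsum
    rw [hsum, sum_mul]
    refine sum_const_nat fun p hp => ?_
    rw [card_filter_mem_realizations_add_single hkl hp]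
    refine hM _ fun j => ?_
    have := card_filter_sdiff_add_single hp j
    rw [← hO j, vertexDegree_add_single] at this
    omega
  have hdeg : ∏ j, (vertexDegree (M + Matrix.single k l 1) j)! =
      (vertexDegree M l + (Pi.single k 1 : κ → ℕ) l + 1) *
        ((vertexDegree M k + 1) * ∏ j, (vertexDegree M j)!) := by
    have h := prod_factorial_add_single (fun j => vertexDegree M j + (Pi.single k 1 : κ → ℕ) j) l
    simp only [vertexDegree_add_single, h, prod_factorial_add_single]
  rw [symmetryFactor_add_single, hdeg]
  have hOk := hO k
  have hOl := hO l
  rw [vertexDegree_add_single] at hOk hOl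
  split_ifs at key ⊢ with h
  · subst h
    rw [card_pairsOfType_self, ← hOk] at key
    simp only [Pi.single_eq_same] at key ⊢
    have hchoose : (vertexDegree M k + 1 + 1) * (vertexDegree M k + 1) =
        (vertexDegree M k + 1 + 1).choose 2 * 2 := by
      have := Nat.add_one_mul_choose_eq (vertexDegree M k + 1) 1
      rwa [Nat.choose_one_right] at this
    calc _ = 2 * (#(realizations c (M + Matrix.single k k 1) O) * (M k k + 1) *
            symmetryFactor M) := by ring
      _ = (vertexDegree M k + 1 + 1).choose 2 * 2 * ∏ j, (vertexDegree M j)! := by rw [key]; ring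
      _ = _ := by rw [← hchoose]; ring
  · rw [card_pairsOfType_of_ne h, ← hOk, ← hOl] at key
    simp only [Pi.single_eq_same, Pi.single_eq_of_ne h, Pi.single_eq_of_ne (Ne.symm h)] at key ⊢
    linarith

theorem card_realizations_mul_symmetryFactor {M : Matrix κ κ ℕ}
    (hupper : ∀ k l, l < k → M k l = 0) {O : Finset ι}
    (hO : ∀ j, vertexDegree M j = #(O.filter (c · = j))) :
    #(realizations c M O) * symmetryFactor M = ∏ j, (vertexDegree M j)! := by
  induction hN : ∑ a, ∑ b, M a b generalizing M O with
  | zero =>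
    obtain rfl : M = 0 := by
      ext a b
      simp only [sum_eq_zero_iff, mem_univ, true_implies] at hN
      exact hN a b
    obtain rfl : O = ∅ := eq_empty_of_forall_notMem fun x hx => by
      have := hO (c x)
      simp only [vertexDegree, Matrix.zero_apply, sum_const_zero, add_zero] at this
      exact (card_pos.mpr ⟨x, by simp [hx]⟩).ne this
    have hempty : HasPairTypeCounts c 0 (∅ : Finset (Finset ι)) := fun k l _ => by simp
    simp [realizations, pairings_empty, filter_singleton, hempty, symmetryFactor, vertexDegree]
  | succ N ih =>
    obtain ⟨k, l, hkl⟩ : ∃ k l, M k l ≠ 0 := by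
      by_contra! h
      simp [h] at hN
    have hle : k ≤ l := not_lt.mp fun h => hkl (hupper k l h)
    obtain ⟨M, rfl⟩ : ∃ M', M = M' + Matrix.single k l 1 := by
      refine ⟨M - Matrix.single k l 1, ?_⟩
      ext a b
      by_cases h : k = a ∧ l = b
      · obtain ⟨rfl, rfl⟩ := h
        simp only [Matrix.add_apply, Matrix.sub_apply, Matrix.single_apply_same]
        omega
      · simp [Matrix.single_apply_of_ne _ _ _ _ _ h]
    refine card_realizations_add_single_mul hle (fun O' hO' => ih ?_ hO' ?_) hO
    · intro a b hba
      have := hupper a b hba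
      rw [Matrix.add_apply] at this
      omega
    · simpa [sum_add_distrib, Matrix.single_apply, ite_and] using hN

end Counting

theorem card_filter_fst_occSet {n : ℕ} (α : Fin n → ℕ) (j : Fin n) :
    #((occSet α).filter (·.1 = j)) = α j := by
  have : (occSet α).filter (·.1 = j) = (range (α j)).map ⟨(j, ·), Prod.mk_right_injective j⟩ := by
    ext ⟨k, r⟩
    simp only [occSet, mem_filter, mem_biUnion, mem_univ, true_and, mem_image, mem_range,
      mem_map, Function.Embedding.coeFn_mk, Prod.mk.injEq]
    aesop
  rw [this, card_map, card_range]

open Classical in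
/-- **Counting the pairings inducing a given multigraph.** Let `M` be an upper triangular
matrix in `ℕ₀^{n×n}` with `SC(M,j) + SR(M,j) = α_j` for all `j`. The number of pairings `P`
of `O = {(k,r) : k ∈ [n], 1 ≤ r ≤ α_k}` such that for all `k ≤ l` the number of pairs in `P`
whose first coordinates are `k` and `l` equals `M k l`, is exactly
`α₁! ⋯ αₙ! / (2^{tr M} ∏_{a,b} M_{a,b}!)`. -/
theorem card_pairings_of_multigraph (n : ℕ) (α : Fin n → ℕ) (M : Matrix (Fin n) (Fin n) ℕ)
    (hupper : ∀ k l : Fin n, l < k → M k l = 0)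
    (hdeg : ∀ j : Fin n, (∑ a, M a j) + (∑ b, M j b) = α j) :
    (((pairings (occSet α)).filter fun P =>
        ∀ k l : Fin n, k ≤ l →
          (P.filter fun p => p.image Prod.fst = ({k, l} : Finset (Fin n))).card = M k l).card
        : ℚ) =
      (∏ j, (Nat.factorial (α j) : ℚ)) /
        ((2 : ℚ) ^ (∑ j, M j j) * ∏ a, ∏ b, (Nat.factorial (M a b) : ℚ)) := by
  have h := card_realizations_mul_symmetryFactor (c := Prod.fst) hupper (O := occSet α)
    fun j => by rw [vertexDegree, hdeg, card_filter_fst_occSet]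
  simp only [vertexDegree, hdeg, symmetryFactor, Matrix.trace, Matrix.diag, realizations] at h
  rw [eq_div_iff (by positivity)]
  norm_cast
  convert h using 4
  exact Iff.rfl
end
end
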